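/- arXiv:2402.05677 — 3 statements merged into one kernel-verified Lean document; each statement's English description precedes it below -/
import Mathlib

section
/- Let n ≥ 1 and k ≥ 2. The operation ⋆ on G = 𝔽_{2^n} × ℤ/2^kℤ given by (x₁,y₁) ⋆ (x₂,y₂) = (x₁+x₂, y₁+y₂+2^{k−1}·ι(Tr(x₁x₂))) is associative, has identity (0,0), and every element (x,y) has the inverse (x, −y+2^{k−1}·ι(Tr(x))); moreover, there exists a bijection φ : 𝔽_{2^n} × ℤ/2^kℤ → (ℤ/2ℤ)^n × ℤ/2^kℤ with φ(g₁ ⋆ g₂) = φ(g₁) + φ(g₂) for all g₁, g₂, i.e., (G, ⋆) is a group isomorphic to ℤ₂^n × ℤ_{2^k}. -/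
/-!
Choosing an 𝔽₂-basis identifies the first factor with ℤ₂ⁿ, so it suffices to show that the
cocycle 2^{k−1}·ι(Tr(x₁x₂)) of ⋆ is a coboundary. Put Q(x) = Σ_{j<i<n} x^{2^i} x^{2^j}, the second
elementary symmetric function of the conjugates of x. Like Tr, it takes values in {0,1} (it is
invariant under Frobenius), and its polar form is Q(x+y) − Q(x) − Q(y) = Tr x · Tr y + Tr(xy). The
carry of 2^{k−2}·ι(Tr x) under addition is 2^{k−1}·ι(Tr x · Tr y), so
c(x) = 2^{k−2}·ι(Tr x) + 2^{k−1}·ι(Q x) satisfies c(x) + c(y) = c(x+y) + 2^{k−1}·ι(Tr(xy)), and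
(x, y) ↦ (x, y + c(x)) turns ⋆ into the componentwise addition.
-/

noncomputable section

/-- The absolute trace Tr(x) = x + x² + x⁴ + … + x^{2^{n−1}}. -/
def Tr {F : Type} [Field F] (n : ℕ) (x : F) : F :=
  ∑ i ∈ Finset.range n, x ^ (2 ^ i)

/-- ι(e): the lift of e ∈ {0,1} ⊆ F to {0,1} ⊆ ℤ, viewed in ℤ/2^kℤ. -/
def iotaZ {F : Type} [Field F] [DecidableEq F] (k : ℕ) (e : F) : ZMod (2 ^ k) :=
  if e = 1 then 1 else 0

/-- The operation ⋆ on 𝔽_{2^n} × ℤ/2^kℤ: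
(x₁,y₁) ⋆ (x₂,y₂) = (x₁+x₂, y₁+y₂+2^{k−1}·ι(Tr(x₁x₂))). -/
def star {F : Type} [Field F] [DecidableEq F] (n k : ℕ)
    (p q : F × ZMod (2 ^ k)) : F × ZMod (2 ^ k) :=
  (p.1 + q.1, p.2 + q.2 + 2 ^ (k - 1) * iotaZ k (Tr n (p.1 * q.1)))

open Finset

/-- `Σ_{j<i<n} x^{2^i} x^{2^j}`, written as `Σ_{i<n} x^{2^i} · Tr i x`. -/
def trQuad {F : Type} [Field F] (n : ℕ) (x : F) : F :=
  ∑ i ∈ range n, x ^ 2 ^ i * Tr i x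

section Field

variable {F : Type} [Field F]

@[simp]
lemma Tr_zero (n : ℕ) : Tr n (0 : F) = 0 :=
  sum_eq_zero fun i _ => zero_pow (Nat.two_pow_pos i).ne'

lemma Tr_succ (n : ℕ) (x : F) : Tr (n + 1) x = Tr n x + x ^ 2 ^ n :=
  sum_range_succ _ n

lemma Tr_succ' (n : ℕ) (x : F) : Tr (n + 1) x = x + Tr n (x ^ 2) := by
  rw [Tr, sum_range_succ', pow_zero, pow_one, add_comm, Tr]
  simp only [pow_succ', pow_mul]

lemma Tr_sq_of_pow_eq {n : ℕ} {x : F} (hx : x ^ 2 ^ n = x) : Tr n (x ^ 2) = Tr n x := by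
  have h := (Tr_succ' n x).symm.trans (Tr_succ n x)
  rw [hx, add_comm x] at h
  exact add_right_cancel h

lemma trQuad_succ (n : ℕ) (x : F) : trQuad (n + 1) x = trQuad n x + x ^ 2 ^ n * Tr n x :=
  sum_range_succ _ n

/-- Splitting off the terms with `j = 0` instead of those with `i = n`. -/
lemma trQuad_succ' (n : ℕ) (x : F) : trQuad (n + 1) x = x * Tr n (x ^ 2) + trQuad n (x ^ 2) := by
  induction n with
  | zero => simp [trQuad, Tr]
  | succ n ih =>
    rw [trQuad_succ, ih, Tr_succ', Tr_succ, trQuad_succ, ← pow_mul, ← pow_succ']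
    ring

lemma trQuad_sq_of_pow_eq {n : ℕ} {x : F} (hx : x ^ 2 ^ n = x) :
    trQuad n (x ^ 2) = trQuad n x := by
  have h := (trQuad_succ' n x).symm.trans (trQuad_succ n x)
  rw [hx, Tr_sq_of_pow_eq hx, add_comm] at h
  exact add_right_cancel h

end Field

section CharTwo

variable {F : Type} [Field F] [CharP F 2]

lemma Tr_add (n : ℕ) (x y : F) : Tr n (x + y) = Tr n x + Tr n y := by
  simp only [Tr, add_pow_char_pow, sum_add_distrib]

lemma Tr_sq (n : ℕ) (x : F) : Tr n x ^ 2 = Tr n (x ^ 2) := by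
  simp only [Tr, sum_pow_char, ← pow_mul, mul_comm]

lemma trQuad_sq (n : ℕ) (x : F) : trQuad n x ^ 2 = trQuad n (x ^ 2) := by
  simp only [trQuad, sum_pow_char, mul_pow, Tr_sq, ← pow_mul, mul_comm]

lemma isIdempotentElem_Tr {n : ℕ} {x : F} (hx : x ^ 2 ^ n = x) : IsIdempotentElem (Tr n x) :=
  (sq _).symm.trans ((Tr_sq n x).trans (Tr_sq_of_pow_eq hx))

lemma isIdempotentElem_trQuad {n : ℕ} {x : F} (hx : x ^ 2 ^ n = x) :
    IsIdempotentElem (trQuad n x) :=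
  (sq _).symm.trans ((trQuad_sq n x).trans (trQuad_sq_of_pow_eq hx))

lemma IsIdempotentElem.add_of_charTwo {a b : F} (ha : IsIdempotentElem a)
    (hb : IsIdempotentElem b) : IsIdempotentElem (a + b) :=
  ha.add hb (by rw [mul_comm b, CharTwo.add_self_eq_zero])

lemma trQuad_add (n : ℕ) (x y : F) :
    trQuad n (x + y) = trQuad n x + trQuad n y + Tr n x * Tr n y + Tr n (x * y) := by
  induction n with
  | zero => simp [trQuad, Tr]
  | succ n ih =>
    simp only [trQuad_succ, Tr_succ, ih, Tr_add, add_pow_char_pow, mul_pow]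
    linear_combination -CharTwo.add_self_eq_zero (x ^ 2 ^ n * y ^ 2 ^ n)

end CharTwo

section Lift

variable {F : Type} [Field F] [DecidableEq F]

@[simp]
lemma iotaZ_zero (k : ℕ) : iotaZ k (0 : F) = 0 := by
  simp [iotaZ]

lemma two_pow_pred_add_self {k : ℕ} (hk : 1 ≤ k) :
    (2 : ZMod (2 ^ k)) ^ (k - 1) + 2 ^ (k - 1) = 0 := by
  rw [← two_mul, ← pow_succ', Nat.sub_add_cancel hk]
  exact_mod_cast ZMod.natCast_self (2 ^ k)

variable [CharP F 2]

lemma two_pow_pred_mul_iotaZ_add {k : ℕ} (hk : 1 ≤ k) {a b : F} (ha : IsIdempotentElem a)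
    (hb : IsIdempotentElem b) :
    2 ^ (k - 1) * iotaZ k (a + b) = 2 ^ (k - 1) * iotaZ k a + 2 ^ (k - 1) * iotaZ k b := by
  rcases IsIdempotentElem.iff_eq_zero_or_one.mp ha with rfl | rfl <;>
    rcases IsIdempotentElem.iff_eq_zero_or_one.mp hb with rfl | rfl <;>
    simp [iotaZ, CharTwo.add_self_eq_zero, two_pow_pred_add_self hk]

/-- The carry: halving the previous lemma costs `2^{k−1}·ι(ab)`. -/
lemma two_pow_sub_two_mul_iotaZ_add {k : ℕ} (hk : 2 ≤ k) {a b : F} (ha : IsIdempotentElem a)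
    (hb : IsIdempotentElem b) :
    2 ^ (k - 2) * iotaZ k (a + b) + 2 ^ (k - 1) * iotaZ k (a * b) =
      2 ^ (k - 2) * iotaZ k a + 2 ^ (k - 2) * iotaZ k b := by
  have h : (2 : ZMod (2 ^ k)) ^ (k - 1) = 2 ^ (k - 2) + 2 ^ (k - 2) := by
    rw [← two_mul, ← pow_succ', show k - 2 + 1 = k - 1 by omega]
  rcases IsIdempotentElem.iff_eq_zero_or_one.mp ha with rfl | rfl <;>
    rcases IsIdempotentElem.iff_eq_zero_or_one.mp hb with rfl | rfl <;>
    simp [iotaZ, CharTwo.add_self_eq_zero, h]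

/-- The coboundary `c` that trivializes the cocycle of `⋆`. -/
def trLift (n k : ℕ) (x : F) : ZMod (2 ^ k) :=
  2 ^ (k - 2) * iotaZ k (Tr n x) + 2 ^ (k - 1) * iotaZ k (trQuad n x)

lemma trLift_add_trLift {n k : ℕ} (hk : 2 ≤ k) (hpow : ∀ z : F, z ^ 2 ^ n = z) (x y : F) :
    trLift n k x + trLift n k y = trLift n k (x + y) + 2 ^ (k - 1) * iotaZ k (Tr n (x * y)) := by
  have hk1 : 1 ≤ k := by omega
  have hTx := isIdempotentElem_Tr (hpow x)
  have hTy := isIdempotentElem_Tr (hpow y)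
  have hQx := isIdempotentElem_trQuad (hpow x)
  have hQy := isIdempotentElem_trQuad (hpow y)
  have hTxTy := hTx.mul hTy
  have carry := two_pow_sub_two_mul_iotaZ_add hk hTx hTy
  rw [← Tr_add] at carry
  have polar : trQuad n (x + y) + Tr n (x * y) = trQuad n x + trQuad n y + Tr n x * Tr n y := by
    linear_combination trQuad_add n x y + CharTwo.add_self_eq_zero (Tr n (x * y))
  have hsplit := two_pow_pred_mul_iotaZ_add hk1 (isIdempotentElem_trQuad (hpow (x + y)))
    (isIdempotentElem_Tr (hpow (x * y)))
  rw [polar, two_pow_pred_mul_iotaZ_add hk1 (hQx.add_of_charTwo hQy) hTxTy,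
    two_pow_pred_mul_iotaZ_add hk1 hQx hQy] at hsplit
  unfold trLift
  linear_combination hsplit - carry

end Lift

lemma nonempty_addEquiv_fin_of_card_eq {F : Type} [Field F] [Fintype F] {p n : ℕ} [Fact p.Prime]
    [CharP F p] (hF : Fintype.card F = p ^ n) : Nonempty (F ≃+ (Fin n → ZMod p)) := by
  let := ZMod.algebra F p
  have hrank : Module.finrank (ZMod p) F = n := by
    rw [Module.card_eq_pow_finrank (K := ZMod p), ZMod.card] at hF
    exact Nat.pow_right_injective (Fact.out : p.Prime).two_le hF
  exact ⟨(Module.finBasisOfFinrankEq (ZMod p) F hrank).equivFun.toAddEquiv⟩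

theorem stmt2_general {F : Type} [Field F] [Fintype F] [DecidableEq F] (n k : ℕ)
    (hk : 2 ≤ k) (hF : Fintype.card F = 2 ^ n) :
    (∀ a b c : F × ZMod (2 ^ k), star n k (star n k a b) c = star n k a (star n k b c)) ∧
    (∀ a : F × ZMod (2 ^ k),
      star n k ((0 : F), (0 : ZMod (2 ^ k))) a = a ∧
      star n k a ((0 : F), (0 : ZMod (2 ^ k))) = a) ∧
    (∀ (x : F) (y : ZMod (2 ^ k)),
      star n k (x, y) (x, -y + 2 ^ (k - 1) * iotaZ k (Tr n x)) =
        ((0 : F), (0 : ZMod (2 ^ k)))) ∧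
    (∃ φ : F × ZMod (2 ^ k) → (Fin n → ZMod 2) × ZMod (2 ^ k),
      Function.Bijective φ ∧ ∀ a b, φ (star n k a b) = φ a + φ b) := by
  have : Fact (Nat.Prime 2) := ⟨Nat.prime_two⟩
  have : CharP F 2 := charP_of_card_eq_prime_pow hF
  have hpow : ∀ z : F, z ^ 2 ^ n = z := fun z => hF ▸ FiniteField.pow_card z
  obtain ⟨L⟩ := nonempty_addEquiv_fin_of_card_eq hF
  let φ := Equiv.prodShear L.toEquiv fun x => Equiv.addRight (trLift n k x)
  have hφ : ∀ a b, φ (star n k a b) = φ a + φ b := fun a b =>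
    Prod.ext (map_add L a.1 b.1) <| by
      simp only [φ, Equiv.prodShear_apply, Equiv.coe_addRight, _root_.star, Prod.snd_add]
      linear_combination -trLift_add_trLift hk hpow a.1 b.1
  refine ⟨fun a b c => φ.injective (by simp only [hφ, add_assoc]),
    fun a => ⟨by simp [_root_.star], by simp [_root_.star]⟩, fun x y => ?_, φ, φ.bijective, hφ⟩
  simp only [_root_.star, ← sq, Tr_sq_of_pow_eq (hpow x), CharTwo.add_self_eq_zero, Prod.mk.injEq,
    true_and]
  linear_combination iotaZ k (Tr n x) * two_pow_pred_add_self (by omega : 1 ≤ k)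

/-- For n ≥ 1 and k ≥ 2, the operation ⋆ is associative, has identity (0,0),
every element (x,y) has inverse (x, −y+2^{k−1}·ι(Tr(x))), and (G,⋆) is
isomorphic to ℤ₂^n × ℤ_{2^k}. -/
theorem stmt2 {F : Type} [Field F] [Fintype F] [DecidableEq F] (n k : ℕ)
    (hn : 1 ≤ n) (hk : 2 ≤ k) (hF : Fintype.card F = 2 ^ n) :
    (∀ a b c : F × ZMod (2 ^ k), star n k (star n k a b) c = star n k a (star n k b c)) ∧
    (∀ a : F × ZMod (2 ^ k),
      star n k ((0 : F), (0 : ZMod (2 ^ k))) a = a ∧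
      star n k a ((0 : F), (0 : ZMod (2 ^ k))) = a) ∧
    (∀ (x : F) (y : ZMod (2 ^ k)),
      star n k (x, y) (x, -y + 2 ^ (k - 1) * iotaZ k (Tr n x)) =
        ((0 : F), (0 : ZMod (2 ^ k)))) ∧
    (∃ φ : F × ZMod (2 ^ k) → (Fin n → ZMod 2) × ZMod (2 ^ k),
      Function.Bijective φ ∧ ∀ a b, φ (star n k a b) = φ a + φ b) :=
  stmt2_general n k hk hF
end
end

section
/- Let n ≥ 1 and k ≥ 2. The number of pairs (x,y) ∈ 𝔽_{2^n} × ℤ/2^kℤ satisfying 2y + 2^{k−1}·ι(Tr(x)) = 0 in ℤ/2^kℤ (i.e., the elements of order at most 2 in the group (𝔽_{2^n} × ℤ/2^kℤ, ⋆)) is exactly 2^{n+1}. -/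
noncomputable section

/-! For fixed `x`, writing `d = 2 ^ (k-2) * ι(Tr x)` (here `k ≥ 2` is used), the condition
reads `2 * (y + d) = 0`. In `ℤ/2^kℤ` this has exactly the two solutions `y = -d` and
`y = 2^(k-1) - d`, so the count is `2 * |F| = 2 ^ (n+1)`. -/

open Finset

namespace ZMod

theorem two_mul_eq_zero_iff {m : ℕ} (z : ZMod (2 * m)) : 2 * z = 0 ↔ z = 0 ∨ z = m := by
  obtain ⟨a, rfl⟩ := intCast_surjective z
  have two_mul_m : ((2 * m : ℕ) : ZMod (2 * m)) = 0 := natCast_self _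
  push_cast at two_mul_m
  constructor
  · intro h
    have hdvd : ((2 * m : ℕ) : ℤ) ∣ 2 * a := by
      rw [← intCast_zmod_eq_zero_iff_dvd]; push_cast; exact h
    push_cast at hdvd
    obtain ⟨c, rfl⟩ := (mul_dvd_mul_iff_left two_ne_zero).mp hdvd
    obtain ⟨e, rfl | rfl⟩ := Int.even_or_odd' c
    · left
      push_cast
      linear_combination (e : ZMod (2 * m)) * two_mul_m
    · right
      push_cast
      linear_combination (e : ZMod (2 * m)) * two_mul_m
  · rintro (h | h) <;> rw [h]
    · exact mul_zero 2
    · exact two_mul_m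

theorem card_filter_two_mul_add_two_mul_eq_zero {N : ℕ} [NeZero N] (hN : 2 ∣ N) (d : ZMod N) :
    #{y : ZMod N | 2 * y + 2 * d = 0} = 2 := by
  obtain ⟨m, rfl⟩ := hN
  have hm : (m : ZMod (2 * m)) ≠ 0 := by
    have : m ≠ 0 := right_ne_zero_of_mul (NeZero.ne (2 * m))
    rw [Ne, natCast_eq_zero_iff]
    exact fun h => this (Nat.eq_zero_of_dvd_of_lt h (by omega))
  refine card_eq_two.mpr ⟨-d, m - d, fun h => hm (by linear_combination -h), ?_⟩
  ext y
  rw [mem_filter_univ, ← mul_add, two_mul_eq_zero_iff, mem_insert, mem_singleton,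
    add_eq_zero_iff_eq_neg, eq_sub_iff_add_eq]

end ZMod

theorem stmt7_general {F : Type} [Field F] [Fintype F] [DecidableEq F] (n k : ℕ)
    (hk : 2 ≤ k) (hF : Fintype.card F = 2 ^ n) :
    (Finset.univ.filter fun p : F × ZMod (2 ^ k) =>
        2 * p.2 + 2 ^ (k - 1) * iotaZ k (Tr n p.1) = 0).card = 2 ^ (n + 1) := by
  have fiber_card (x : F) :
      #{y : ZMod (2 ^ k) | 2 * y + 2 ^ (k - 1) * iotaZ k (Tr n x) = 0} = 2 := by
    have hsplit : (2 : ZMod (2 ^ k)) ^ (k - 1) = 2 * 2 ^ (k - 2) := by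
      rw [← pow_succ']; congr 1; omega
    simp only [hsplit, mul_assoc]
    exact ZMod.card_filter_two_mul_add_two_mul_eq_zero (dvd_pow_self 2 (by omega)) _
  rw [card_filter, Fintype.sum_prod_type]
  simp only [← card_filter, fiber_card, sum_const, card_univ, hF, smul_eq_mul, pow_succ]

/-- For n ≥ 1, k ≥ 2, the number of pairs (x,y) ∈ 𝔽_{2^n} × ℤ/2^kℤ with
2y + 2^{k−1}·ι(Tr(x)) = 0 (elements of order at most 2 in (𝔽_{2^n} × ℤ/2^kℤ, ⋆))
is exactly 2^{n+1}. -/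
theorem stmt7 {F : Type} [Field F] [Fintype F] [DecidableEq F] (n k : ℕ)
    (hn : 1 ≤ n) (hk : 2 ≤ k) (hF : Fintype.card F = 2 ^ n) :
    (Finset.univ.filter fun p : F × ZMod (2 ^ k) =>
        2 * p.2 + 2 ^ (k - 1) * iotaZ k (Tr n p.1) = 0).card = 2 ^ (n + 1) :=
  stmt7_general n k hk hF
end
end

section
/- Let m ≥ 3 and let d be a positive integer with d² ≡ 1 (mod 2^m−1). Let α₁, α₂, α₃ ∈ 𝔽_{2^m}^* be pairwise distinct with α_i^{d+1} = 1 for i = 1,2,3, and suppose α₄ := α₁+α₂+α₃ also satisfies α₄^{d+1} = 1 (in particular α₄ ≠ 0). Define π_i : 𝔽_{2^m} → 𝔽_{2^m} by π_i(y) = α_i y^d for i = 1,2,3,4. Then each π_i is an involution of 𝔽_{2^m} (π_i(π_i(y)) = y for all y), hence a permutation; moreover π₄(y) = π₁(y)+π₂(y)+π₃(y) for all y, so the permutations π₁, π₂, π₃ satisfy the (𝒜_m) property: π₄ = π₁+π₂+π₃ is a permutation and π₄^{−1} = π₁^{−1}+π₂^{−1}+π₃^{−1}. -/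
/-!
Since `d ^ 2 ≡ 1` modulo `|F| - 1`, the map `y ↦ y ^ (d ^ 2)` is the identity of `F`, so
`α ^ (d + 1) = 1` makes `y ↦ α * y ^ d` an involution: applied twice it gives
`α ^ (d + 1) * y ^ (d ^ 2) = y`. Each `πᵢ` is therefore its own inverse, and the identity for the
inverses is the identity `π₄ = π₁ + π₂ + π₃` itself, which holds because `πᵢ` is linear in `αᵢ`.
-/

theorem FiniteField.pow_eq_self_of_modEq_one {F : Type*} [Field F] [Fintype F] {n : ℕ}
    (hn : 1 ≤ n) (hmod : n ≡ 1 [MOD Fintype.card F - 1]) (y : F) : y ^ n = y := by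
  obtain ⟨k, hk⟩ := (Nat.modEq_iff_dvd' hn).mp hmod.symm
  rcases eq_or_ne y 0 with rfl | hy
  · exact zero_pow (by omega)
  · rw [← Nat.sub_add_cancel hn, hk, pow_succ, pow_mul,
      FiniteField.pow_card_sub_one_eq_one y hy, one_pow, one_mul]

theorem involutive_mul_pow {M : Type*} [CommMonoid M] {d : ℕ} (hpow : ∀ y : M, y ^ (d ^ 2) = y)
    {α : M} (hα : α ^ (d + 1) = 1) : Function.Involutive fun y : M ↦ α * y ^ d := fun y ↦ by
  change α * (α * y ^ d) ^ d = y
  rw [mul_pow, ← mul_assoc, ← pow_succ', ← pow_mul, ← sq, hα, one_mul, hpow]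

theorem Function.Involutive.invFun_eq {α : Type*} [Nonempty α] {f : α → α}
    (hf : Function.Involutive f) : Function.invFun f = f :=
  funext fun y ↦ hf.injective (by rw [Function.invFun_eq ⟨f y, hf y⟩, hf y])

theorem stmt13_general {F : Type} [Field F] [Fintype F] (m d : ℕ)
    (hF : Fintype.card F = 2 ^ m)
    (hd : 1 ≤ d) (hdd : d ^ 2 ≡ 1 [MOD 2 ^ m - 1])
    (α₁ α₂ α₃ α₄ : F)
    (h1 : α₁ ^ (d + 1) = 1) (h2 : α₂ ^ (d + 1) = 1) (h3 : α₃ ^ (d + 1) = 1)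
    (h4def : α₄ = α₁ + α₂ + α₃) (h4 : α₄ ^ (d + 1) = 1)
    (π₁ π₂ π₃ π₄ : F → F)
    (hp1 : ∀ y, π₁ y = α₁ * y ^ d) (hp2 : ∀ y, π₂ y = α₂ * y ^ d)
    (hp3 : ∀ y, π₃ y = α₃ * y ^ d) (hp4 : ∀ y, π₄ y = α₄ * y ^ d) :
    (∀ y, π₁ (π₁ y) = y) ∧ (∀ y, π₂ (π₂ y) = y) ∧
    (∀ y, π₃ (π₃ y) = y) ∧ (∀ y, π₄ (π₄ y) = y) ∧
    Function.Bijective π₁ ∧ Function.Bijective π₂ ∧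
    Function.Bijective π₃ ∧ Function.Bijective π₄ ∧
    (∀ y, π₄ y = π₁ y + π₂ y + π₃ y) ∧
    (∀ y, Function.invFun π₄ y =
      Function.invFun π₁ y + Function.invFun π₂ y + Function.invFun π₃ y) := by
  have hpow : ∀ y : F, y ^ (d ^ 2) = y :=
    FiniteField.pow_eq_self_of_modEq_one (Nat.one_le_pow _ _ hd) (hF ▸ hdd)
  obtain rfl : π₁ = _ := funext hp1
  obtain rfl : π₂ = _ := funext hp2
  obtain rfl : π₃ = _ := funext hp3
  obtain rfl : π₄ = _ := funext hp4
  have i1 := involutive_mul_pow hpow h1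
  have i2 := involutive_mul_pow hpow h2
  have i3 := involutive_mul_pow hpow h3
  have i4 := involutive_mul_pow hpow h4
  have hsum : ∀ y : F, α₄ * y ^ d = α₁ * y ^ d + α₂ * y ^ d + α₃ * y ^ d := fun y ↦ by
    rw [h4def]; ring
  refine ⟨i1, i2, i3, i4, i1.bijective, i2.bijective, i3.bijective, i4.bijective, hsum, ?_⟩
  simpa only [i1.invFun_eq, i2.invFun_eq, i3.invFun_eq, i4.invFun_eq] using hsum

/-- Let m ≥ 3, d² ≡ 1 (mod 2^m−1), and α₁,α₂,α₃ ∈ 𝔽_{2^m}^* pairwise distinct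
with α_i^{d+1} = 1, α₄ = α₁+α₂+α₃ with α₄^{d+1} = 1. Then π_i(y) = α_i y^d
are involutions (hence permutations), π₄ = π₁+π₂+π₃ pointwise, and
π₁,π₂,π₃ satisfy the (𝒜_m) property: π₄ is a permutation and
π₄^{−1} = π₁^{−1}+π₂^{−1}+π₃^{−1}. -/
theorem stmt13 {F : Type} [Field F] [Fintype F] (m d : ℕ)
    (hm : 3 ≤ m) (hF : Fintype.card F = 2 ^ m)
    (hd : 1 ≤ d) (hdd : d ^ 2 ≡ 1 [MOD 2 ^ m - 1])
    (α₁ α₂ α₃ α₄ : F)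
    (h10 : α₁ ≠ 0) (h20 : α₂ ≠ 0) (h30 : α₃ ≠ 0)
    (h12 : α₁ ≠ α₂) (h13 : α₁ ≠ α₃) (h23 : α₂ ≠ α₃)
    (h1 : α₁ ^ (d + 1) = 1) (h2 : α₂ ^ (d + 1) = 1) (h3 : α₃ ^ (d + 1) = 1)
    (h4def : α₄ = α₁ + α₂ + α₃) (h4 : α₄ ^ (d + 1) = 1)
    (π₁ π₂ π₃ π₄ : F → F)
    (hp1 : ∀ y, π₁ y = α₁ * y ^ d) (hp2 : ∀ y, π₂ y = α₂ * y ^ d)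
    (hp3 : ∀ y, π₃ y = α₃ * y ^ d) (hp4 : ∀ y, π₄ y = α₄ * y ^ d) :
    (∀ y, π₁ (π₁ y) = y) ∧ (∀ y, π₂ (π₂ y) = y) ∧
    (∀ y, π₃ (π₃ y) = y) ∧ (∀ y, π₄ (π₄ y) = y) ∧
    Function.Bijective π₁ ∧ Function.Bijective π₂ ∧
    Function.Bijective π₃ ∧ Function.Bijective π₄ ∧
    (∀ y, π₄ y = π₁ y + π₂ y + π₃ y) ∧
    (∀ y, Function.invFun π₄ y =
      Function.invFun π₁ y + Function.invFun π₂ y + Function.invFun π₃ y) :=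
  stmt13_general m d hF hd hdd α₁ α₂ α₃ α₄ h1 h2 h3 h4def h4 π₁ π₂ π₃ π₄ hp1 hp2 hp3 hp4
end
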